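/- Let S be a connected simple graph with at least two vertices and 𝐖 ≤ GL_n(F_2) its flipping group. Then the center of 𝐖 is trivial. -/
import Mathlib


open Matrix

open scoped Classical in
/-- The flipping matrix of a vertex `s` of a simple graph: `(flipMat G s) u v = 1` iff
`u = v`, or (`v = s` and `uv` is an edge). -/
noncomputable def flipMat {V : Type*} [Fintype V] (G : SimpleGraph V) (s : V) :
    Matrix V V (ZMod 2) :=
  Matrix.of fun u v => if u = v ∨ (v = s ∧ G.Adj u v) then 1 else 0

/-- The flipping group of a simple graph: the subgroup of `GL_n(F_2)` generated by the
flipping matrices of the vertices. -/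
noncomputable def flipGroup {V : Type*} [Fintype V] [DecidableEq V] (G : SimpleGraph V) :
    Subgroup (GL V (ZMod 2)) :=
  Subgroup.closure {g : GL V (ZMod 2) | ∃ s : V, (g : Matrix V V (ZMod 2)) = flipMat G s}

open scoped Classical in
/-- Auxiliary rank-one matrix: `flipMat G s = 1 + flipAux G s`. -/
noncomputable def flipAux {V : Type*} [Fintype V] (G : SimpleGraph V) (s : V) :
    Matrix V V (ZMod 2) :=
  Matrix.of fun u v => if v = s ∧ G.Adj u s then 1 else 0

lemma flipMat_decomp {V : Type*} [Fintype V] [DecidableEq V] (G : SimpleGraph V) (s : V) :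
    flipMat G s = 1 + flipAux G s := by
  classical
  ext u v
  simp only [flipMat, flipAux, Matrix.of_apply, Matrix.add_apply, Matrix.one_apply]
  by_cases h1 : u = v
  · subst h1
    have h2 : ¬ (u = s ∧ G.Adj u s) := by
      rintro ⟨rfl, h⟩; exact G.irrefl h
    simp [h2]
  · by_cases h2 : v = s
    · subst h2
      simp [h1]
    · simp [h1, h2]

lemma flipAux_mul_self {V : Type*} [Fintype V] (G : SimpleGraph V) (s : V) :
    flipAux G s * flipAux G s = 0 := by
  classical
  ext u v
  rw [Matrix.mul_apply]
  have : ∀ k ∈ Finset.univ, flipAux G s u k * flipAux G s k v = 0 := by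
    intro k _
    by_cases hk : k = s ∧ G.Adj u s
    · obtain ⟨rfl, _⟩ := hk
      simp [flipAux]
    · simp [flipAux, hk]
  simp [Finset.sum_eq_zero this]

lemma flipMat_mul_self {V : Type*} [Fintype V] [DecidableEq V] (G : SimpleGraph V) (s : V) :
    flipMat G s * flipMat G s = 1 := by
  classical
  rw [flipMat_decomp]
  have h0 := flipAux_mul_self G s
  have hA : flipAux G s + flipAux G s = 0 := by
    ext u v
    simp only [Matrix.add_apply, flipAux, Matrix.of_apply, Matrix.zero_apply]
    split_ifs <;> decide
  have hexp : (1 + flipAux G s) * (1 + flipAux G s)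
      = 1 + (flipAux G s + flipAux G s) + flipAux G s * flipAux G s := by
    noncomm_ring
  rw [hexp, hA, h0, add_zero, add_zero]

/-- The flipping matrix as an element of `GL`. -/
noncomputable def flipUnit {V : Type*} [Fintype V] [DecidableEq V] (G : SimpleGraph V) (s : V) :
    GL V (ZMod 2) :=
  ⟨flipMat G s, flipMat G s, flipMat_mul_self G s, flipMat_mul_self G s⟩

theorem center_flipGroup_eq_bot {V : Type*} [Fintype V] [DecidableEq V] (G : SimpleGraph V)
    (hconn : G.Connected) (hcard : 1 < Fintype.card V) :
    Subgroup.center (flipGroup G) = ⊥ := by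
  classical
  rw [eq_bot_iff]
  intro g hg
  have hm := Subgroup.mem_center_iff.mp hg
  set M : Matrix V V (ZMod 2) := ((g : GL V (ZMod 2)) : Matrix V V (ZMod 2)) with hM
  -- every vertex has a neighbor
  have hadj : ∀ s : V, ∃ t : V, G.Adj t s := by
    intro s
    obtain ⟨v, hv⟩ := Fintype.exists_ne_of_one_lt_card hcard s
    obtain ⟨w⟩ := hconn.preconnected s v
    cases w with
    | nil => exact absurd rfl hv
    | cons h p => exact ⟨_, h.symm⟩
  -- g commutes with all flipping matrices
  have hcomm : ∀ s : V, flipMat G s * M = M * flipMat G s := by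
    intro s
    have h := hm ⟨flipUnit G s, Subgroup.subset_closure ⟨s, rfl⟩⟩
    have h3 : (flipUnit G s : GL V (ZMod 2)) * (g : GL V (ZMod 2))
        = (g : GL V (ZMod 2)) * (flipUnit G s : GL V (ZMod 2)) := congrArg Subtype.val h
    have h4 := congrArg Units.val h3
    simpa [flipUnit, hM] using h4
  -- off-diagonal entries vanish
  have hoff : ∀ s v : V, v ≠ s → M s v = 0 := by
    intro s v hvs
    obtain ⟨t, hts⟩ := hadj s
    have h2 : (flipMat G s * M) t v = (M * flipMat G s) t v := by rw [hcomm s]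
    have lhs : (flipMat G s * M) t v = M t v + M s v := by
      rw [flipMat_decomp, add_mul, one_mul, Matrix.add_apply]
      congr 1
      rw [Matrix.mul_apply, Finset.sum_eq_single s]
      · simp [flipAux, hts]
      · intro k _ hk
        simp [flipAux, hk]
      · intro hs
        exact absurd (Finset.mem_univ s) hs
    have rhs : (M * flipMat G s) t v = M t v := by
      rw [Matrix.mul_apply, Finset.sum_eq_single v]
      · simp [flipMat]
      · intro k _ hk
        have hcond : ¬ (k = v ∨ (v = s ∧ G.Adj k v)) := by
          rintro (rfl | ⟨rfl, _⟩)
          · exact hk rfl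
          · exact hvs rfl
        simp [flipMat, hcond]
      · intro hs
        exact absurd (Finset.mem_univ v) hs
    rw [lhs, rhs] at h2
    exact left_eq_add.mp h2.symm
  -- diagonal entries are 1
  have hdiag : ∀ s : V, M s s = 1 := by
    intro s
    have hinv : M * (((g : GL V (ZMod 2))⁻¹ : GL V (ZMod 2)) : Matrix V V (ZMod 2)) = 1 := by
      rw [hM]
      exact (g : GL V (ZMod 2)).mul_inv
    have h1 : (M * (((g : GL V (ZMod 2))⁻¹ : GL V (ZMod 2)) : Matrix V V (ZMod 2))) s s = 1 := by
      rw [hinv]; simp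
    rw [Matrix.mul_apply, Finset.sum_eq_single s] at h1
    · have key : ∀ a b : ZMod 2, a * b = 1 → a = 1 := by decide
      exact key _ _ h1
    · intro k _ hk
      rw [hoff s k hk, zero_mul]
    · intro hs
      exact absurd (Finset.mem_univ s) hs
  have hMone : M = 1 := by
    ext u v
    by_cases h : u = v
    · subst h
      simp [Matrix.one_apply, hdiag u]
    · rw [hoff u v (Ne.symm h), Matrix.one_apply_ne h]
  have hg1 : (g : GL V (ZMod 2)) = 1 := Units.ext hMone
  exact Subgroup.mem_bot.mpr (Subtype.ext hg1)
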